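/- Let B be a deterministic specification IOVPTS with inputs L_I and outputs L_U and n states. Then one can effectively construct a visibly pushdown fault model T which is ioco-like complete for B (i.e., for every implementation IOVPTS I over L = L_I ∪ L_U, I passes T if and only if I ioco-like-conforms to B); moreover T is deterministic and has n+1 states. -/

import Mathlib

inductive VPKind : Type where
  | call : VPKind
  | ret : VPKind
  | intern : VPKind

/-- A visibly pushdown automaton over an alphabet `A` partitioned by `kind` into
call (push), return (pop) and simple (internal) symbols.  The stack bottom `⊥` is
implicit: a stack is a `List Stack`, the empty list meaning the stack contains only `⊥`.
`intT` transitions labelled by `none` are ε-transitions. -/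
structure VPA (A : Type) (kind : A → VPKind) where
  State : Type
  Stack : Type
  fintypeState : Fintype State
  init : Set State
  final : Set State
  pushT : Set (State × A × Stack × State)
  popT : Set (State × A × Option Stack × State)
  intT : Set (State × Option A × State)
  push_call : ∀ p a Z q, (p, a, Z, q) ∈ pushT → kind a = VPKind.call
  pop_ret : ∀ p a Z q, (p, a, Z, q) ∈ popT → kind a = VPKind.ret
  int_simple : ∀ p a q, (p, some a, q) ∈ intT → kind a = VPKind.intern

attribute [instance] VPA.fintypeState

namespace VPA

variable {A : Type} {kind : A → VPKind}

abbrev Conf (M : VPA A kind) : Type := M.State × List A × List M.Stack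

inductive Step (M : VPA A kind) : M.Conf → M.Conf → Prop where
  | push {p q : M.State} {a : A} {Z : M.Stack} {σ : List A} {α : List M.Stack} :
      (p, a, Z, q) ∈ M.pushT → Step M (p, a :: σ, α) (q, σ, Z :: α)
  | pop {p q : M.State} {a : A} {Z : M.Stack} {σ : List A} {α : List M.Stack} :
      (p, a, some Z, q) ∈ M.popT → Step M (p, a :: σ, Z :: α) (q, σ, α)
  | popEmpty {p q : M.State} {a : A} {σ : List A} :
      (p, a, none, q) ∈ M.popT → Step M (p, a :: σ, []) (q, σ, [])
  | int {p q : M.State} {a : A} {σ : List A} {α : List M.Stack} :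
      (p, some a, q) ∈ M.intT → Step M (p, a :: σ, α) (q, σ, α)
  | eps {p q : M.State} {σ : List A} {α : List M.Stack} :
      (p, none, q) ∈ M.intT → Step M (p, σ, α) (q, σ, α)

/-- Reflexive-transitive closure `↦*` of the one-step move relation. -/
def Steps (M : VPA A kind) : M.Conf → M.Conf → Prop := Relation.ReflTransGen M.Step

/-- `n`-th power `↦ⁿ` of the one-step move relation. -/
def StepN (M : VPA A kind) : ℕ → M.Conf → M.Conf → Prop
  | 0 => fun c c' => c = c'
  | n + 1 => fun c c' => ∃ d, M.Step c d ∧ StepN M n d c'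

def Lang (M : VPA A kind) : Set (List A) :=
  { σ | ∃ s₀ ∈ M.init, ∃ p ∈ M.final, ∃ β, M.Steps (s₀, σ, []) (p, [], β) }

def NoEps (M : VPA A kind) : Prop := ∀ p q, (p, none, q) ∉ M.intT

def Deterministic (M : VPA A kind) : Prop :=
  M.init.Subsingleton ∧
  (∀ p a Z₁ q₁ Z₂ q₂, (p, a, Z₁, q₁) ∈ M.pushT → (p, a, Z₂, q₂) ∈ M.pushT →
      Z₁ = Z₂ ∧ q₁ = q₂) ∧
  (∀ p a Z q₁ q₂, (p, a, Z, q₁) ∈ M.popT → (p, a, Z, q₂) ∈ M.popT → q₁ = q₂) ∧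
  (∀ p a q₁ q₂, (p, a, q₁) ∈ M.intT → (p, a, q₂) ∈ M.intT → q₁ = q₂) ∧
  (∀ p q',
    ((∃ a Z q, (p, a, Z, q) ∈ M.pushT) ∨ (∃ a Z q, (p, a, Z, q) ∈ M.popT) ∨
      (∃ a q, (p, some a, q) ∈ M.intT)) → (p, none, q') ∉ M.intT)

def NonBlocking (M : VPA A kind) : Prop :=
  ∀ (s : M.State) (σ : List A) (α : List M.Stack), ∃ p β, M.Steps (s, σ, α) (p, [], β)

/-- The synchronous product of two VPAs over a common alphabet. -/
def prod (M N : VPA A kind) : VPA A kind where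
  State := M.State × N.State
  Stack := M.Stack × N.Stack
  fintypeState := inferInstance
  init := M.init ×ˢ N.init
  final := M.final ×ˢ N.final
  pushT := { t | (t.1.1, t.2.1, t.2.2.1.1, t.2.2.2.1) ∈ M.pushT ∧
                 (t.1.2, t.2.1, t.2.2.1.2, t.2.2.2.2) ∈ N.pushT }
  popT := { t |
      match t.2.2.1 with
      | some Z => (t.1.1, t.2.1, some Z.1, t.2.2.2.1) ∈ M.popT ∧
                  (t.1.2, t.2.1, some Z.2, t.2.2.2.2) ∈ N.popT
      | none => (t.1.1, t.2.1, (none : Option M.Stack), t.2.2.2.1) ∈ M.popT ∧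
                (t.1.2, t.2.1, (none : Option N.Stack), t.2.2.2.2) ∈ N.popT }
  intT := { t |
      match t.2.1 with
      | some a => (t.1.1, some a, t.2.2.1) ∈ M.intT ∧ (t.1.2, some a, t.2.2.2) ∈ N.intT
      | none => (t.1.1 = t.2.2.1 ∧ (t.1.2, none, t.2.2.2) ∈ N.intT) ∨
                (t.1.2 = t.2.2.2 ∧ (t.1.1, none, t.2.2.1) ∈ M.intT) }
  push_call := fun _ _ _ _ h => M.push_call _ _ _ _ h.1
  pop_ret := by
    intro p a Z q h
    cases Z with
    | some Z => exact M.pop_ret _ _ _ _ h.1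
    | none => exact M.pop_ret _ _ _ _ h.1
  int_simple := fun _ _ _ h => M.int_simple _ _ _ h.1

end VPA

/-- A visibly pushdown transition system over an alphabet `L` partitioned by `kind`.
`intT` transitions labelled by `none` are silent `ς`-transitions. -/
structure VPTS (L : Type) (kind : L → VPKind) where
  State : Type
  Stack : Type
  fintypeState : Fintype State
  init : Set State
  pushT : Set (State × L × Stack × State)
  popT : Set (State × L × Option Stack × State)
  intT : Set (State × Option L × State)
  push_call : ∀ p a Z q, (p, a, Z, q) ∈ pushT → kind a = VPKind.call
  pop_ret : ∀ p a Z q, (p, a, Z, q) ∈ popT → kind a = VPKind.ret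
  int_simple : ∀ p a q, (p, some a, q) ∈ intT → kind a = VPKind.intern

attribute [instance] VPTS.fintypeState

namespace VPTS

variable {L : Type} {kind : L → VPKind}

abbrev Conf (M : VPTS L kind) : Type := M.State × List M.Stack

/-- `M.Obs c σ c'` means `c ⇒^σ c'`: there is a sequence of one-step moves from `c`
to `c'` whose sequence of non-silent labels is `σ`. -/
inductive Obs (M : VPTS L kind) : M.Conf → List L → M.Conf → Prop where
  | refl (c : M.Conf) : Obs M c [] c
  | push {p q : M.State} {a : L} {Z : M.Stack} {α : List M.Stack} {σ : List L} {c : M.Conf} :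
      (p, a, Z, q) ∈ M.pushT → Obs M (q, Z :: α) σ c → Obs M (p, α) (a :: σ) c
  | pop {p q : M.State} {a : L} {Z : M.Stack} {α : List M.Stack} {σ : List L} {c : M.Conf} :
      (p, a, some Z, q) ∈ M.popT → Obs M (q, α) σ c → Obs M (p, Z :: α) (a :: σ) c
  | popEmpty {p q : M.State} {a : L} {σ : List L} {c : M.Conf} :
      (p, a, none, q) ∈ M.popT → Obs M (q, []) σ c → Obs M (p, []) (a :: σ) c
  | int {p q : M.State} {a : L} {α : List M.Stack} {σ : List L} {c : M.Conf} :
      (p, some a, q) ∈ M.intT → Obs M (q, α) σ c → Obs M (p, α) (a :: σ) c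
  | silent {p q : M.State} {α : List M.Stack} {σ : List L} {c : M.Conf} :
      (p, none, q) ∈ M.intT → Obs M (q, α) σ c → Obs M (p, α) σ c

/-- The observable traces of `M`. -/
def otr (M : VPTS L kind) : Set (List L) :=
  { σ | ∃ s₀ ∈ M.init, ∃ c, M.Obs (s₀, []) σ c }

/-- `I` (D,F)-visibly conforms to `S`. -/
def VConf (I S : VPTS L kind) (D F : Set (List L)) : Prop :=
  (∀ σ ∈ I.otr ∩ F, σ ∉ S.otr) ∧ (∀ σ ∈ I.otr ∩ D, σ ∈ S.otr)

def after (M : VPTS L kind) (c : M.Conf) (σ : List L) : Set M.Conf :=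
  { c' | M.Obs c σ c' }

/-- The output symbols (members of `LU`) enabled at some configuration of `C`. -/
def outSet (M : VPTS L kind) (LU : Set L) (C : Set M.Conf) : Set L :=
  { ℓ | ℓ ∈ LU ∧ ∃ c ∈ C, ∃ c', M.Obs c [ℓ] c' }

/-- `I` ioco-like conforms to `S`, with output alphabet `LU`. -/
def Ioco (LU : Set L) (I S : VPTS L kind) : Prop :=
  ∀ σ ∈ S.otr, ∀ q₀ ∈ I.init, ∀ ℓ ∈ I.outSet LU (I.after (q₀, []) σ),
    ∃ s₀ ∈ S.init, ℓ ∈ S.outSet LU (S.after (s₀, []) σ)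

/-- A VPTS is deterministic: at most one initial state and each observable trace
reaches a unique configuration. -/
def Deterministic (M : VPTS L kind) : Prop :=
  M.init.Subsingleton ∧
  ∀ (σ : List L), ∀ s₀ ∈ M.init, ∀ s₀' ∈ M.init, ∀ c c',
    M.Obs (s₀, []) σ c → M.Obs (s₀', []) σ c' → c = c'

/-- The cross product of two VPTSs over a common alphabet: observable moves
synchronize, silent moves interleave. -/
def prod (M N : VPTS L kind) : VPTS L kind where
  State := M.State × N.State
  Stack := M.Stack × N.Stack
  fintypeState := inferInstance
  init := M.init ×ˢ N.init
  pushT := { t | (t.1.1, t.2.1, t.2.2.1.1, t.2.2.2.1) ∈ M.pushT ∧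
                 (t.1.2, t.2.1, t.2.2.1.2, t.2.2.2.2) ∈ N.pushT }
  popT := { t |
      match t.2.2.1 with
      | some Z => (t.1.1, t.2.1, some Z.1, t.2.2.2.1) ∈ M.popT ∧
                  (t.1.2, t.2.1, some Z.2, t.2.2.2.2) ∈ N.popT
      | none => (t.1.1, t.2.1, (none : Option M.Stack), t.2.2.2.1) ∈ M.popT ∧
                (t.1.2, t.2.1, (none : Option N.Stack), t.2.2.2.2) ∈ N.popT }
  intT := { t |
      match t.2.1 with
      | some a => (t.1.1, some a, t.2.2.1) ∈ M.intT ∧ (t.1.2, some a, t.2.2.2) ∈ N.intT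
      | none => (t.1.1 = t.2.2.1 ∧ (t.1.2, none, t.2.2.2) ∈ N.intT) ∨
                (t.1.2 = t.2.2.2 ∧ (t.1.1, none, t.2.2.1) ∈ M.intT) }
  push_call := fun _ _ _ _ h => M.push_call _ _ _ _ h.1
  pop_ret := by
    intro p a Z q h
    cases Z with
    | some Z => exact M.pop_ret _ _ _ _ h.1
    | none => exact M.pop_ret _ _ _ _ h.1
  int_simple := fun _ _ _ h => M.int_simple _ _ _ h.1

/-- `I` passes the fault model `(T, fail)`: no run of the cross product reaches
the `fail` state of `T`. -/
def Passes (T : VPTS L kind) (fail : T.State) (I : VPTS L kind) : Prop :=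
  ∀ (σ : List L), ∀ t₀ ∈ T.init, ∀ q₀ ∈ I.init, ∀ (q : I.State)
    (α : List (T.Stack × I.Stack)),
    ¬ (T.prod I).Obs ((t₀, q₀), []) σ ((fail, q), α)

/-- `Q` adheres to the test suite `T`. -/
def Adheres (Q : VPTS L kind) (T : Set (List L)) : Prop := Q.otr ∩ T = ∅

/-- `T` is a complete (sound and exhaustive) test suite for `S` and `(D,F)`. -/
def CompleteSuite (S : VPTS L kind) (D F : Set (List L)) (T : Set (List L)) : Prop :=
  ∀ I : VPTS L kind, (Adheres I T ↔ VConf I S D F)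

/-- The concatenation `otr(S)·LU`. -/
def otrConcat (S : VPTS L kind) (LU : Set L) : Set (List L) :=
  { w | ∃ σ ∈ S.otr, ∃ ℓ ∈ LU, w = σ ++ [ℓ] }

end VPTS

/-!
The fault model is `S` with one extra state `fail` that has no transitions: from a state of `S`,
every output `ℓ ∈ LU` that `S` cannot perform by a visible move with the current stack top leads
to `fail` by a transition of the kind of `ℓ`. So a run of `T × I` reaching `fail` is a trace
`σ ++ [ℓ]` of `I` where `σ` is a trace of `S` and `ℓ` is an output refused by the configuration
`S` reaches by `σ`. For deterministic `S` that configuration is unique and each of its silent moves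
leads back to it, so `ℓ` is enabled after `σ` exactly when it is enabled by a visible move there:
`T` detects precisely the violations of ioco-like conformance. The same observation makes `T`
deterministic, since `fail` moves are added only where `S` has no visible move.
-/

namespace VPTS

variable {L : Type} {kind : L → VPKind}

inductive VStep (M : VPTS L kind) : M.Conf → L → M.Conf → Prop where
  | push {p q : M.State} {a : L} {Z : M.Stack} {α : List M.Stack} :
      (p, a, Z, q) ∈ M.pushT → VStep M (p, α) a (q, Z :: α)
  | pop {p q : M.State} {a : L} {Z : M.Stack} {α : List M.Stack} :
      (p, a, some Z, q) ∈ M.popT → VStep M (p, Z :: α) a (q, α)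
  | popEmpty {p q : M.State} {a : L} :
      (p, a, none, q) ∈ M.popT → VStep M (p, []) a (q, [])
  | int {p q : M.State} {a : L} {α : List M.Stack} :
      (p, some a, q) ∈ M.intT → VStep M (p, α) a (q, α)

section Runs

variable {M : VPTS L kind}

theorem Obs.trans {c d e : M.Conf} {σ τ : List L} (h₁ : M.Obs c σ d) (h₂ : M.Obs d τ e) :
    M.Obs c (σ ++ τ) e := by
  induction h₁ with
  | refl => exact h₂
  | push h _ ih => exact .push h (ih h₂)
  | pop h _ ih => exact .pop h (ih h₂)
  | popEmpty h _ ih => exact .popEmpty h (ih h₂)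
  | int h _ ih => exact .int h (ih h₂)
  | silent h _ ih => exact .silent h (ih h₂)

theorem Obs.cons_of_vStep {c d e : M.Conf} {a : L} {σ : List L} (h₁ : M.VStep c a d)
    (h₂ : M.Obs d σ e) : M.Obs c (a :: σ) e := by
  cases h₁ with
  | push h => exact .push h h₂
  | pop h => exact .pop h h₂
  | popEmpty h => exact .popEmpty h h₂
  | int h => exact .int h h₂

theorem Obs.stack_eq_of_nil {c d : M.Conf} (h : M.Obs c [] d) : d.2 = c.2 := by
  generalize hσ : ([] : List L) = σ at h
  induction h with
  | refl => rfl
  | silent _ _ ih => exact ih hσ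
  | _ => cases hσ

theorem Obs.exists_of_cons {c e : M.Conf} {a : L} {σ : List L} (h : M.Obs c (a :: σ) e) :
    ∃ d d', M.Obs c [] d ∧ M.VStep d a d' ∧ M.Obs d' σ e := by
  generalize hτ : a :: σ = τ at h
  induction h with
  | refl => cases hτ
  | push h h' => cases hτ; exact ⟨_, _, .refl _, .push h, h'⟩
  | pop h h' => cases hτ; exact ⟨_, _, .refl _, .pop h, h'⟩
  | popEmpty h h' => cases hτ; exact ⟨_, _, .refl _, .popEmpty h, h'⟩
  | int h h' => cases hτ; exact ⟨_, _, .refl _, .int h, h'⟩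
  | silent h _ ih =>
    obtain ⟨d, d', hd, hv, he⟩ := ih hτ
    exact ⟨d, d', .silent h hd, hv, he⟩

theorem Obs.exists_of_append {c e : M.Conf} {σ τ : List L} (h : M.Obs c (σ ++ τ) e) :
    ∃ d, M.Obs c σ d ∧ M.Obs d τ e := by
  induction σ generalizing c with
  | nil => exact ⟨c, .refl c, h⟩
  | cons a σ ih =>
    obtain ⟨d, d', hd, hv, he⟩ := h.exists_of_cons
    obtain ⟨f, hf, hfe⟩ := ih he
    exact ⟨f, hd.trans (.cons_of_vStep hv hf), hfe⟩

theorem VStep.exists_pushT {p : M.State} {α : List M.Stack} {a : L}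
    {c : M.Conf} (h : M.VStep (p, α) a c) (hk : kind a = .call) :
    ∃ Z q, (p, a, Z, q) ∈ M.pushT := by
  cases h with
  | push h => exact ⟨_, _, h⟩
  | pop h | popEmpty h => cases hk.symm.trans (M.pop_ret _ _ _ _ h)
  | int h => cases hk.symm.trans (M.int_simple _ _ _ h)

theorem VStep.exists_popT {p : M.State} {α : List M.Stack} {a : L}
    {c : M.Conf} (h : M.VStep (p, α) a c) (hk : kind a = .ret) :
    ∃ q, (p, a, α.head?, q) ∈ M.popT := by
  cases h with
  | push h => cases hk.symm.trans (M.push_call _ _ _ _ h)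
  | pop h | popEmpty h => exact ⟨_, h⟩
  | int h => cases hk.symm.trans (M.int_simple _ _ _ h)

theorem VStep.exists_intT {p : M.State} {α : List M.Stack} {a : L}
    {c : M.Conf} (h : M.VStep (p, α) a c) (hk : kind a = .intern) :
    ∃ q, (p, some a, q) ∈ M.intT := by
  cases h with
  | push h => cases hk.symm.trans (M.push_call _ _ _ _ h)
  | pop h | popEmpty h => cases hk.symm.trans (M.pop_ret _ _ _ _ h)
  | int h => exact ⟨_, h⟩

theorem Deterministic.exists_vStep_of_obs_append (hdet : M.Deterministic)
    {s₀ : M.State} {σ : List L} {ℓ : L} {c e : M.Conf} (hs₀ : s₀ ∈ M.init)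
    (hc : M.Obs (s₀, []) σ c) (he : M.Obs (s₀, []) (σ ++ [ℓ]) e) : ∃ c', M.VStep c ℓ c' := by
  obtain ⟨d, hd, hdℓ⟩ := he.exists_of_append
  obtain ⟨d₁, d₂, hd₁, hv, -⟩ := hdℓ.exists_of_cons
  obtain rfl : d₁ = c := hdet.2 σ s₀ hs₀ s₀ hs₀ _ _ (by simpa using hd.trans hd₁) hc
  exact ⟨d₂, hv⟩

end Runs

section Product

variable {M N : VPTS L kind}

theorem Obs.prod_left_of_nil {c c' : M.Conf} (h : M.Obs c [] c') (n : N.State)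
    (γ : List (M.Stack × N.Stack)) : (M.prod N).Obs ((c.1, n), γ) [] ((c'.1, n), γ) := by
  generalize hσ : ([] : List L) = σ at h
  induction h with
  | refl => exact .refl _
  | silent h _ ih => exact .silent (by exact Or.inr ⟨rfl, h⟩) (ih hσ)
  | _ => cases hσ

theorem Obs.prod_right_of_nil {d d' : N.Conf} (h : N.Obs d [] d') (m : M.State)
    (γ : List (M.Stack × N.Stack)) : (M.prod N).Obs ((m, d.1), γ) [] ((m, d'.1), γ) := by
  generalize hσ : ([] : List L) = σ at h
  induction h with
  | refl => exact .refl _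
  | silent h _ ih => exact .silent (by exact Or.inl ⟨rfl, h⟩) (ih hσ)
  | _ => cases hσ

theorem VStep.prod {c c' : M.Conf} {d d' : N.Conf} {a : L} (h₁ : M.VStep c a c')
    (h₂ : N.VStep d a d') (hlen : c.2.length = d.2.length) :
    (M.prod N).VStep ((c.1, d.1), c.2.zip d.2) a ((c'.1, d'.1), c'.2.zip d'.2) ∧
      c'.2.length = d'.2.length := by
  cases h₁ with
  | push h₁ =>
    cases h₂ with
    | push h₂ => exact ⟨.push ⟨h₁, h₂⟩, by simpa using hlen⟩
    | pop h₂ | popEmpty h₂ => cases (M.push_call _ _ _ _ h₁).symm.trans (N.pop_ret _ _ _ _ h₂)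
    | int h₂ => cases (M.push_call _ _ _ _ h₁).symm.trans (N.int_simple _ _ _ h₂)
  | pop h₁ =>
    cases h₂ with
    | push h₂ => cases (M.pop_ret _ _ _ _ h₁).symm.trans (N.push_call _ _ _ _ h₂)
    | pop h₂ => exact ⟨.pop ⟨h₁, h₂⟩, by simpa using hlen⟩
    | popEmpty h₂ => simp at hlen
    | int h₂ => cases (M.pop_ret _ _ _ _ h₁).symm.trans (N.int_simple _ _ _ h₂)
  | popEmpty h₁ =>
    cases h₂ with
    | push h₂ => cases (M.pop_ret _ _ _ _ h₁).symm.trans (N.push_call _ _ _ _ h₂)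
    | pop h₂ => simp at hlen
    | popEmpty h₂ => exact ⟨.popEmpty ⟨h₁, h₂⟩, rfl⟩
    | int h₂ => cases (M.pop_ret _ _ _ _ h₁).symm.trans (N.int_simple _ _ _ h₂)
  | int h₁ =>
    cases h₂ with
    | push h₂ => cases (M.int_simple _ _ _ h₁).symm.trans (N.push_call _ _ _ _ h₂)
    | pop h₂ | popEmpty h₂ => cases (M.int_simple _ _ _ h₁).symm.trans (N.pop_ret _ _ _ _ h₂)
    | int h₂ => exact ⟨.int ⟨h₁, h₂⟩, hlen⟩

theorem Obs.prod {c c' : M.Conf} {d d' : N.Conf} {σ : List L} (h₁ : M.Obs c σ c')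
    (h₂ : N.Obs d σ d') (hlen : c.2.length = d.2.length) :
    (M.prod N).Obs ((c.1, d.1), c.2.zip d.2) σ ((c'.1, d'.1), c'.2.zip d'.2) ∧
      c'.2.length = d'.2.length := by
  induction σ generalizing c d with
  | nil =>
    have hc := h₁.stack_eq_of_nil
    have hd := h₂.stack_eq_of_nil
    rw [hc, hd]
    exact ⟨(h₁.prod_left_of_nil d.1 _).trans (h₂.prod_right_of_nil c'.1 _), hlen⟩
  | cons a σ ih =>
    obtain ⟨c₁, c₂, hc₁, hv₁, hr₁⟩ := h₁.exists_of_cons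
    obtain ⟨d₁, d₂, hd₁, hv₂, hr₂⟩ := h₂.exists_of_cons
    rw [← hc₁.stack_eq_of_nil, ← hd₁.stack_eq_of_nil] at hlen ⊢
    obtain ⟨hv, hlen₂⟩ := hv₁.prod hv₂ hlen
    obtain ⟨hr, hlen'⟩ := ih hr₁ hr₂ hlen₂
    exact ⟨(hc₁.prod_left_of_nil d.1 _).trans <|
      (hd₁.prod_right_of_nil c₁.1 _).trans (.cons_of_vStep hv hr), hlen'⟩

theorem Obs.fst_of_prod {c c' : (M.prod N).Conf} {σ : List L} (h : (M.prod N).Obs c σ c') :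
    M.Obs (c.1.1, c.2.map Prod.fst) σ (c'.1.1, c'.2.map Prod.fst) := by
  induction h with
  | refl => exact .refl _
  | push h _ ih => exact .push h.1 ih
  | pop h _ ih => exact .pop h.1 ih
  | popEmpty h _ ih => exact .popEmpty h.1 ih
  | int h _ ih => exact .int h.1 ih
  | silent h _ ih =>
    rcases h with ⟨hpq, -⟩ | ⟨-, h⟩
    · rwa [hpq]
    · exact .silent h ih

theorem Obs.snd_of_prod {c c' : (M.prod N).Conf} {σ : List L} (h : (M.prod N).Obs c σ c') :
    N.Obs (c.1.2, c.2.map Prod.snd) σ (c'.1.2, c'.2.map Prod.snd) := by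
  induction h with
  | refl => exact .refl _
  | push h _ ih => exact .push h.2 ih
  | pop h _ ih => exact .pop h.2 ih
  | popEmpty h _ ih => exact .popEmpty h.2 ih
  | int h _ ih => exact .int h.2 ih
  | silent h _ ih =>
    rcases h with ⟨-, h⟩ | ⟨hpq, -⟩
    · exact .silent h ih
    · rwa [hpq]

end Product

end VPTS

namespace FaultModel

variable {L : Type} {kind : L → VPKind} (LU : Set L) (S : VPTS L kind)

inductive PushT : Option S.State × L × Option S.Stack × Option S.State → Prop where
  | spec {p a Z q} : (p, a, Z, q) ∈ S.pushT → PushT (some p, a, some Z, some q)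
  | fail {p ℓ} : ℓ ∈ LU → kind ℓ = .call → (∀ Z q, (p, ℓ, Z, q) ∉ S.pushT) →
      PushT (some p, ℓ, none, none)

inductive PopT : Option S.State × L × Option (Option S.Stack) × Option S.State → Prop where
  | spec {p a Z q} : (p, a, some Z, q) ∈ S.popT → PopT (some p, a, some (some Z), some q)
  | specEmpty {p a q} : (p, a, none, q) ∈ S.popT → PopT (some p, a, none, some q)
  | fail {p ℓ Z} : ℓ ∈ LU → kind ℓ = .ret → (∀ q, (p, ℓ, some Z, q) ∉ S.popT) →
      PopT (some p, ℓ, some (some Z), none)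
  | failEmpty {p ℓ} : ℓ ∈ LU → kind ℓ = .ret → (∀ q, (p, ℓ, none, q) ∉ S.popT) →
      PopT (some p, ℓ, none, none)

inductive IntT : Option S.State × Option L × Option S.State → Prop where
  | spec {p x q} : (p, x, q) ∈ S.intT → IntT (some p, x, some q)
  | fail {p ℓ} : ℓ ∈ LU → kind ℓ = .intern → (∀ q, (p, some ℓ, q) ∉ S.intT) →
      IntT (some p, some ℓ, none)

end FaultModel

open FaultModel in
/-- `none` is both the state `fail` and the stack symbol pushed by a call into `fail`. -/
def faultModel {L : Type} {kind : L → VPKind} (LU : Set L) (S : VPTS L kind) :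
    VPTS L kind where
  State := Option S.State
  Stack := Option S.Stack
  fintypeState := inferInstance
  init := some '' S.init
  pushT := {t | PushT LU S t}
  popT := {t | PopT LU S t}
  intT := {t | IntT LU S t}
  push_call := by
    rintro _ _ _ _ (⟨h⟩ | ⟨-, hk, -⟩)
    exacts [S.push_call _ _ _ _ h, hk]
  pop_ret := by
    rintro _ _ _ _ (⟨h⟩ | ⟨h⟩ | ⟨-, hk, -⟩ | ⟨-, hk, -⟩)
    exacts [S.pop_ret _ _ _ _ h, S.pop_ret _ _ _ _ h, hk, hk]
  int_simple := by
    rintro _ _ _ (⟨h⟩ | ⟨-, hk, -⟩)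
    exacts [S.int_simple _ _ _ h, hk]

namespace FaultModel

open VPTS

variable {L : Type} {kind : L → VPKind} {LU : Set L} {S : VPTS L kind}

variable (LU) in
def liftConf (c : S.Conf) : (faultModel LU S).Conf := (some c.1, c.2.map some)

variable (LU) in
def failConf (c : S.Conf) (ℓ : L) : (faultModel LU S).Conf :=
  (none, match kind ℓ with
    | .call => none :: c.2.map some
    | .ret => (c.2.map some).tail
    | .intern => c.2.map some)

theorem obs_liftConf {c c' : S.Conf} {σ : List L} (h : S.Obs c σ c') :
    (faultModel LU S).Obs (liftConf LU c) σ (liftConf LU c') := by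
  induction h with
  | refl => exact .refl _
  | push h _ ih => exact .push (.spec h) ih
  | pop h _ ih => exact .pop (.spec h) ih
  | popEmpty h _ ih => exact .popEmpty (.specEmpty h) ih
  | int h _ ih => exact .int (.spec h) ih
  | silent h _ ih => exact .silent (.spec h) ih

theorem eq_of_obs_of_fst_eq_none {c d : (faultModel LU S).Conf} {σ : List L}
    (h : (faultModel LU S).Obs c σ d) (hc : c.1 = none) : σ = [] ∧ d = c := by
  induction h with
  | refl => exact ⟨rfl, rfl⟩
  | push h | pop h | popEmpty h | int h | silent h => cases hc; cases h

theorem exists_of_obs_liftConf_nil {c : S.Conf} {d : (faultModel LU S).Conf}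
    (h : (faultModel LU S).Obs (liftConf LU c) [] d) :
    ∃ c', S.Obs c [] c' ∧ d = liftConf LU c' := by
  generalize hσ : ([] : List L) = σ at h
  generalize hc : liftConf LU c = c₀ at h
  induction h generalizing c with
  | refl => exact ⟨c, .refl c, hc.symm⟩
  | silent h _ ih =>
    cases hc
    cases h with
    | spec h =>
      obtain ⟨c', hc', rfl⟩ := ih (c := (_, c.2)) hσ rfl
      exact ⟨c', .silent h hc', rfl⟩
  | _ => cases hσ

theorem vStep_liftConf_cases {c : S.Conf} {a : L} {d : (faultModel LU S).Conf}
    (h : (faultModel LU S).VStep (liftConf LU c) a d) :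
    (∃ c', S.VStep c a c' ∧ d = liftConf LU c') ∨
      (a ∈ LU ∧ (¬∃ c', S.VStep c a c') ∧ d = failConf LU c a) := by
  obtain ⟨s, α⟩ := c
  simp only [liftConf] at h ⊢
  generalize hβ : (α.map some : List (faultModel LU S).Stack) = β at h
  cases h with
  | push h =>
    cases h with
    | spec h => exact .inl ⟨_, .push h, by rw [← hβ]; rfl⟩
    | fail hℓ hk hne =>
      refine .inr ⟨hℓ, fun ⟨_, hv⟩ => ?_, by subst hβ; simp only [failConf, hk]⟩
      obtain ⟨Z, q, h⟩ := hv.exists_pushT hk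
      exact hne Z q h
  | pop h =>
    cases α with
    | nil => cases hβ
    | cons Z α =>
      cases hβ
      cases h with
      | spec h => exact .inl ⟨_, .pop h, rfl⟩
      | fail hℓ hk hne =>
        refine .inr ⟨hℓ, fun ⟨_, hv⟩ => ?_, by simp only [failConf, hk]; rfl⟩
        obtain ⟨q, h⟩ := hv.exists_popT hk
        exact hne q h
  | popEmpty h =>
    cases α with
    | cons => cases hβ
    | nil =>
      cases h with
      | specEmpty h => exact .inl ⟨_, .popEmpty h, rfl⟩
      | failEmpty hℓ hk hne =>
        refine .inr ⟨hℓ, fun ⟨_, hv⟩ => ?_, by simp only [failConf, hk]; rfl⟩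
        obtain ⟨q, h⟩ := hv.exists_popT hk
        exact hne q h
  | int h =>
    cases h with
    | spec h => exact .inl ⟨_, .int h, by rw [← hβ]⟩
    | fail hℓ hk hne =>
      refine .inr ⟨hℓ, fun ⟨_, hv⟩ => ?_, by subst hβ; simp only [failConf, hk]⟩
      obtain ⟨q, h⟩ := hv.exists_intT hk
      exact hne q h

theorem vStep_failConf {c : S.Conf} {a : L} (hℓ : a ∈ LU) (hno : ¬∃ c', S.VStep c a c') :
    (faultModel LU S).VStep (liftConf LU c) a (failConf LU c a) := by
  obtain ⟨s, α⟩ := c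
  cases hk : kind a
  · simp only [failConf, hk]
    exact .push (.fail hℓ hk fun _ _ h => hno ⟨_, .push h⟩)
  · cases α with
    | nil =>
      simp only [failConf, hk]
      exact .popEmpty (.failEmpty hℓ hk fun _ h => hno ⟨_, .popEmpty h⟩)
    | cons Z α =>
      simp only [failConf, hk]
      exact .pop (.fail hℓ hk fun _ h => hno ⟨_, .pop h⟩)
  · simp only [failConf, hk]
    exact .int (.fail hℓ hk fun _ h => hno ⟨_, .int h⟩)

theorem obs_liftConf_cases {c : S.Conf} {σ : List L} {d : (faultModel LU S).Conf}
    (h : (faultModel LU S).Obs (liftConf LU c) σ d) :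
    (∃ c', S.Obs c σ c' ∧ d = liftConf LU c') ∨
      ∃ σ' ℓ c', σ = σ' ++ [ℓ] ∧ S.Obs c σ' c' ∧ ℓ ∈ LU ∧ (¬∃ c'', S.VStep c' ℓ c'') ∧
        d = failConf LU c' ℓ := by
  induction σ generalizing c with
  | nil => exact .inl (exists_of_obs_liftConf_nil h)
  | cons a σ ih =>
    obtain ⟨d₁, d₂, h₁, hv, h₂⟩ := h.exists_of_cons
    obtain ⟨c₁, hc₁, rfl⟩ := exists_of_obs_liftConf_nil h₁
    rcases vStep_liftConf_cases hv with ⟨c₂, hv', rfl⟩ | ⟨hℓ, hno, rfl⟩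
    · rcases ih h₂ with ⟨c', hc', rfl⟩ | ⟨σ', ℓ, c', rfl, hc', hℓ, hno, rfl⟩
      · exact .inl ⟨c', hc₁.trans (.cons_of_vStep hv' hc'), rfl⟩
      · exact .inr ⟨a :: σ', ℓ, c', rfl, hc₁.trans (.cons_of_vStep hv' hc'), hℓ, hno, rfl⟩
    · obtain ⟨rfl, rfl⟩ := eq_of_obs_of_fst_eq_none h₂ rfl
      exact .inr ⟨[], a, c₁, rfl, hc₁, hℓ, hno, rfl⟩

theorem deterministic (hdet : S.Deterministic) : (faultModel LU S).Deterministic := by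
  refine ⟨hdet.1.image _, ?_⟩
  rintro σ _ ⟨s₀, hs₀, rfl⟩ _ ⟨s₀', hs₀', rfl⟩ d d' h h'
  obtain rfl := hdet.1 hs₀ hs₀'
  rcases obs_liftConf_cases (c := (s₀, [])) h with
    ⟨c, hc, rfl⟩ | ⟨σ₁, ℓ₁, c₁, rfl, hc₁, -, hno₁, rfl⟩ <;>
  rcases obs_liftConf_cases (c := (s₀, [])) h' with
    ⟨c', hc', rfl⟩ | ⟨σ₂, ℓ₂, c₂, hσ, hc₂, -, hno₂, rfl⟩
  · rw [hdet.2 σ s₀ hs₀ s₀ hs₀ c c' hc hc']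
  · exact absurd (hdet.exists_vStep_of_obs_append hs₀ hc₂ (hσ ▸ hc)) hno₂
  · exact absurd (hdet.exists_vStep_of_obs_append hs₀ hc₁ hc') hno₁
  · obtain ⟨rfl, hℓ⟩ := List.append_inj' hσ rfl
    cases List.singleton_inj.mp hℓ
    rw [hdet.2 σ₁ s₀ hs₀ s₀ hs₀ c₁ c₂ hc₁ hc₂]

theorem ioco_of_passes {I : VPTS L kind} (hP : Passes (faultModel LU S) none I) :
    Ioco LU I S := by
  rintro σ ⟨s₀, hs₀, c, hc⟩ q₀ hq₀ ℓ ⟨hℓ, d, hd, e, he⟩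
  refine ⟨s₀, hs₀, hℓ, c, hc, ?_⟩
  suffices hv : ∃ c', S.VStep c ℓ c' by
    obtain ⟨c', hv⟩ := hv
    exact ⟨c', .cons_of_vStep hv (.refl _)⟩
  by_contra hno
  obtain ⟨d₁, d₂, hd₁, hv, -⟩ := he.exists_of_cons
  have hI : I.Obs (q₀, []) (σ ++ [ℓ]) d₂ := by
    simpa using (hd.trans hd₁).trans (.cons_of_vStep hv (.refl _))
  have hT : (faultModel LU S).Obs (liftConf LU (s₀, [])) (σ ++ [ℓ]) (failConf LU c ℓ) :=
    (obs_liftConf hc).trans (.cons_of_vStep (vStep_failConf hℓ hno) (.refl _))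
  exact hP _ _ ⟨s₀, hs₀, rfl⟩ q₀ hq₀ d₂.1 _ (hT.prod hI rfl).1

theorem passes_of_ioco (hdet : S.Deterministic) {I : VPTS L kind} (hI : Ioco LU I S) :
    Passes (faultModel LU S) none I := by
  rintro σ _ ⟨s₀, hs₀, rfl⟩ q₀ hq₀ q α h
  rcases obs_liftConf_cases (c := (s₀, [])) h.fst_of_prod with
    ⟨c, -, hc⟩ | ⟨σ', ℓ, c, rfl, hc, hℓ, hno, -⟩
  · cases congrArg Prod.fst hc
  · obtain ⟨d, hd, hdℓ⟩ := h.snd_of_prod.exists_of_append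
    obtain ⟨s₀', hs₀', -, c', hc', e, he⟩ := hI σ' ⟨s₀, hs₀, c, hc⟩ q₀ hq₀ ℓ ⟨hℓ, d, hd, _, hdℓ⟩
    obtain rfl := hdet.1 hs₀ hs₀'
    exact hno (hdet.exists_vStep_of_obs_append hs₀ hc (hc'.trans he))

end FaultModel

/-- For a deterministic specification `S` with `n` states there is a
deterministic visibly pushdown fault model `(T, fail)` with `n+1` states that is
ioco-like complete for `S`: every implementation passes `T` iff it ioco-like
conforms to `S`. -/
theorem fault_model_ioco_complete {L : Type} {kind : L → VPKind} (LU : Set L)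
    (S : VPTS L kind) (hdet : S.Deterministic) :
    ∃ (T : VPTS L kind) (fail : T.State),
      T.Deterministic ∧
      Fintype.card T.State = Fintype.card S.State + 1 ∧
      ∀ I : VPTS L kind, VPTS.Passes T fail I ↔ VPTS.Ioco LU I S :=
  ⟨faultModel LU S, none, FaultModel.deterministic hdet, Fintype.card_option,
    fun _ => ⟨FaultModel.ioco_of_passes, FaultModel.passes_of_ioco hdet⟩⟩
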